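/- arXiv:math/0602201 — 3 statements merged into one kernel-verified Lean document; each statement's English description precedes it below -/
import Mathlib

section
/- Let H : ℝ → ℂ be a Schwartz function that does not vanish identically on (0,∞), let F(s) = s·H(s) for s ≥ 0, and let I = ∫₀^∞ |F(t)|² dt/t, which is finite and strictly positive. Then there exist constants C > 0 and δ ∈ (0,1) such that for every a with 1 < a < 1 + δ and every s > 0, the series ∑_{n∈ℤ} |F(a^{2n} s)|² converges and its sum lies between (I/(2 log a))·(1 − C·(a−1)²·|log(a−1)|) and (I/(2 log a))·(1 + C·(a−1)²·|log(a−1)|). -/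
/-!
Substituting `t = exp u`, the sum becomes the Riemann sum with step `h = 2 log a` of
`g u = |F (exp u)|²`, whose integral over `ℝ` is `I`. Summed over all cells, the trapezoid rule
with step `h` is this same Riemann sum, and its error on one cell `[x, x + h]` is `∫ K g''` for the
kernel `K u = (u - x) (x + h - u) / 2 ≤ h² / 8`. Hence `|h Σ - I| ≤ h² / 8 ∫ |g''| = O((a - 1)²)`,
and `|log (a - 1)| ≥ 1` once `a - 1 < e⁻¹`. The functions `g`, `g'`, `g''` are combinations of
`exp (k u) φ (exp u)` with `φ` Schwartz, which are integrable because `t ^ (k - 1) φ t` is.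
-/

open MeasureTheory Set Real

variable {E : Type*} [NormedAddCommGroup E] [NormedSpace ℝ E]

theorem MeasureTheory.Integrable.hasSum_intervalIntegral_add_mul {f : ℝ → E} (hf : Integrable f)
    (c : ℝ) {h : ℝ} (hh : 0 < h) :
    HasSum (fun n : ℤ => ∫ x in c + n * h..c + (n + 1) * h, f x) (∫ x, f x) := by
  have hcells := iUnion_Ioc_add_zsmul hh c
  have hdisj := pairwise_disjoint_Ioc_add_zsmul c h
  simp only [zsmul_eq_mul, Int.cast_add, Int.cast_one] at hcells hdisj
  have hsum := hasSum_integral_iUnion (fun _ => measurableSet_Ioc) hdisj hf.integrableOn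
  rw [hcells, setIntegral_univ] at hsum
  convert hsum using 2 with n
  exact intervalIntegral.integral_of_le (by linarith)

section

variable [CompleteSpace E]

theorem trapezoid_sub_integral_eq {g g' g'' : ℝ → E} {a b : ℝ}
    (hg : ∀ x ∈ uIcc a b, HasDerivAt g (g' x) x) (hg' : ∀ x ∈ uIcc a b, HasDerivAt g' (g'' x) x)
    (hg'' : IntervalIntegrable g'' volume a b) :
    ((b - a) / 2) • (g a + g b) - ∫ x in a..b, g x =
      ∫ x in a..b, ((x - a) * (b - x) / 2) • g'' x := by
  -- with `K x = (x - a) (b - x) / 2`, the function `K • g' - K' • g` is a primitive of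
  -- `K • g'' + g`, and `K` vanishes at both ends
  have hprim : ∀ x ∈ uIcc a b, HasDerivAt
      (fun x => ((x - a) * (b - x) / 2) • g' x - ((a + b - 2 * x) / 2) • g x)
      (g x + ((x - a) * (b - x) / 2) • g'' x) x := by
    intro x hx
    have hK : HasDerivAt (fun x : ℝ => (x - a) * (b - x) / 2) ((a + b - 2 * x) / 2) x :=
      ((((hasDerivAt_id' x).sub_const a).mul ((hasDerivAt_id' x).const_sub b)).div_const 2
        ).congr_deriv (by ring)
    have hK' : HasDerivAt (fun x : ℝ => (a + b - 2 * x) / 2) (-1) x :=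
      ((((hasDerivAt_id' x).const_mul 2).const_sub (a + b)).div_const 2).congr_deriv (by ring)
    exact ((hK.smul (hg' x hx)).sub (hK'.smul (hg x hx))).congr_deriv (by module)
  have hgc : ContinuousOn g (uIcc a b) := fun x hx => (hg x hx).continuousAt.continuousWithinAt
  have hKg'' : IntervalIntegrable (fun x => ((x - a) * (b - x) / 2) • g'' x) volume a b :=
    hg''.continuousOn_smul (by fun_prop)
  have hftc := intervalIntegral.integral_eq_sub_of_hasDerivAt hprim
    (hgc.intervalIntegrable.add hKg'')
  rw [intervalIntegral.integral_add hgc.intervalIntegrable hKg''] at hftc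
  simp only [sub_self, zero_mul, mul_zero, zero_div, zero_smul, zero_sub] at hftc
  rw [sub_eq_iff_eq_add', hftc]
  module

theorem norm_trapezoid_sub_integral_le {g g' g'' : ℝ → E} {a b : ℝ} (hab : a ≤ b)
    (hg : ∀ x ∈ uIcc a b, HasDerivAt g (g' x) x) (hg' : ∀ x ∈ uIcc a b, HasDerivAt g' (g'' x) x)
    (hg'' : IntervalIntegrable g'' volume a b) :
    ‖((b - a) / 2) • (g a + g b) - ∫ x in a..b, g x‖ ≤ (b - a) ^ 2 / 8 * ∫ x in a..b, ‖g'' x‖ := by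
  rw [trapezoid_sub_integral_eq hg hg' hg'', ← intervalIntegral.integral_const_mul]
  refine intervalIntegral.norm_integral_le_of_norm_le hab
    (ae_of_all _ fun x hx => ?_) (hg''.norm.const_mul _)
  have hK : |(x - a) * (b - x) / 2| ≤ (b - a) ^ 2 / 8 := by
    rw [abs_of_nonneg (by nlinarith [hx.1, hx.2])]
    nlinarith [sq_nonneg (2 * x - a - b)]
  rw [norm_smul, Real.norm_eq_abs]
  exact mul_le_mul_of_nonneg_right hK (norm_nonneg _)

theorem mul_norm_le_integral_norm_add {g g' : ℝ → E} {a b : ℝ} (hab : a ≤ b)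
    (hg : ∀ x ∈ uIcc a b, HasDerivAt g (g' x) x) (hg' : IntervalIntegrable g' volume a b) :
    (b - a) * ‖g a‖ ≤ (∫ x in a..b, ‖g x‖) + (b - a) * ∫ x in a..b, ‖g' x‖ := by
  have hgc : ContinuousOn g (uIcc a b) := fun x hx => (hg x hx).continuousAt.continuousWithinAt
  have hpt : ∀ x ∈ Icc a b, ‖g a‖ ≤ ‖g x‖ + ∫ x in a..b, ‖g' x‖ := by
    intro x hx
    have hsub : uIcc a x ⊆ uIcc a b := uIcc_subset_uIcc_left (by rwa [uIcc_of_le hab])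
    have hftc : g x - g a = ∫ y in a..x, g' y :=
      (intervalIntegral.integral_eq_sub_of_hasDerivAt (fun y hy => hg y (hsub hy))
        (hg'.mono_set hsub)).symm
    calc ‖g a‖ ≤ ‖g x‖ + ‖g x - g a‖ := norm_le_norm_add_norm_sub _ _
      _ ≤ ‖g x‖ + ∫ y in a..b, ‖g' y‖ := by
        gcongr
        rw [hftc]
        exact (intervalIntegral.norm_integral_le_integral_norm hx.1).trans
          (intervalIntegral.integral_mono_interval le_rfl hx.1 hx.2
            (ae_of_all _ fun _ => norm_nonneg _) hg'.norm)
  calc (b - a) * ‖g a‖ = ∫ _ in a..b, ‖g a‖ := by simp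
    _ ≤ ∫ x in a..b, (‖g x‖ + ∫ y in a..b, ‖g' y‖) :=
      intervalIntegral.integral_mono_on hab intervalIntegrable_const
        ((hgc.norm.add continuousOn_const).intervalIntegrable) hpt
    _ = (∫ x in a..b, ‖g x‖) + (b - a) * ∫ x in a..b, ‖g' x‖ := by
      rw [intervalIntegral.integral_add (hgc.norm.intervalIntegrable) intervalIntegrable_const]
      simp

theorem summable_comp_add_mul_of_integrable_deriv {g g' : ℝ → E}
    (hg : ∀ x, HasDerivAt g (g' x) x) (hgi : Integrable g) (hg'i : Integrable g') (c : ℝ)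
    {h : ℝ} (hh : 0 < h) : Summable (fun n : ℤ => g (c + n * h)) := by
  refine Summable.of_norm_bounded
    (((hgi.norm.hasSum_intervalIntegral_add_mul c hh).mul_left h⁻¹).add
      (hg'i.norm.hasSum_intervalIntegral_add_mul c hh)).summable fun n => ?_
  have hcell := mul_norm_le_integral_norm_add
    (le_of_lt (by linarith : c + n * h < c + (n + 1) * h)) (fun x _ => hg x) hg'i.intervalIntegrable
  rw [show c + (n + 1) * h - (c + n * h) = h by ring] at hcell
  rw [inv_mul_eq_div, div_add' _ _ _ hh.ne', le_div_iff₀' hh]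
  linarith

theorem norm_smul_tsum_sub_integral_le {g g' g'' : ℝ → E}
    (hg : ∀ x, HasDerivAt g (g' x) x) (hg' : ∀ x, HasDerivAt g' (g'' x) x)
    (hgi : Integrable g) (hg'i : Integrable g') (hg''i : Integrable g'') (c : ℝ) {h : ℝ}
    (hh : 0 < h) :
    ‖h • ∑' n : ℤ, g (c + n * h) - ∫ x, g x‖ ≤ h ^ 2 / 8 * ∫ x, ‖g'' x‖ := by
  have hS := (summable_comp_add_mul_of_integrable_deriv hg hgi hg'i c hh).hasSum
  have hS' : HasSum (fun n : ℤ => g (c + (n + 1) * h)) (∑' n : ℤ, g (c + n * h)) := by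
    rw [← (Equiv.addRight (1 : ℤ)).hasSum_iff] at hS
    simpa only [Function.comp_def, Equiv.coe_addRight, Int.cast_add, Int.cast_one] using hS
  have htrap : HasSum (fun n : ℤ => (h / 2) • (g (c + n * h) + g (c + (n + 1) * h)))
      (h • ∑' n : ℤ, g (c + n * h)) := by
    convert (hS.add hS').const_smul (h / 2) using 1
    module
  refine (htrap.sub (hgi.hasSum_intervalIntegral_add_mul c hh)).norm_le_of_bounded
    ((hg''i.norm.hasSum_intervalIntegral_add_mul c hh).mul_left (h ^ 2 / 8)) fun n => ?_
  have hcell := norm_trapezoid_sub_integral_le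
    (le_of_lt (by linarith : c + n * h < c + (n + 1) * h))
    (fun x _ => hg x) (fun x _ => hg' x) hg''i.intervalIntegrable
  rwa [show c + (n + 1) * h - (c + n * h) = h by ring] at hcell

end

noncomputable def expWeight (k : ℕ) (φ : ℝ → E) (u : ℝ) : E := exp (k * u) • φ (exp u)

theorem hasDerivAt_expWeight {φ φ' : ℝ → E} (k : ℕ) {u : ℝ}
    (hφ : HasDerivAt φ (φ' (exp u)) (exp u)) :
    HasDerivAt (expWeight k φ) ((k : ℝ) • expWeight k φ u + expWeight (k + 1) φ' u) u := by
  have hexp : HasDerivAt (fun u => exp (k * u)) (k * exp (k * u)) u := by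
    simpa [mul_comm] using ((hasDerivAt_id' u).const_mul (k : ℝ)).exp
  refine (hexp.smul (hφ.scomp u (hasDerivAt_exp u))).congr_deriv ?_
  simp only [expWeight, smul_smul, ← exp_add, Nat.cast_add, Nat.cast_one, Function.comp_apply]
  rw [add_comm, add_one_mul]

-- the shape of the change of variables formula `integral_image_eq_integral_abs_deriv_smul` for `exp`
theorem expWeight_succ (φ : ℝ → E) (k : ℕ) (u : ℝ) :
    expWeight (k + 1) φ u = |exp u| • exp u ^ k • φ (exp u) := by
  rw [expWeight, abs_of_pos (exp_pos u), smul_smul, ← exp_nat_mul, ← exp_add]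
  push_cast; ring_nf

theorem integral_expWeight (φ : ℝ → E) (k : ℕ) :
    ∫ u, expWeight (k + 1) φ u = ∫ t in Ioi 0, t ^ k • φ t := by
  rw [← range_exp, ← image_univ, integral_image_eq_integral_abs_deriv_smul MeasurableSet.univ
    (fun u _ => (hasDerivAt_exp u).hasDerivWithinAt) exp_injective.injOn, setIntegral_univ]
  simp_rw [expWeight_succ]

theorem integrable_expWeight_iff {φ : ℝ → E} {k : ℕ} :
    Integrable (expWeight (k + 1) φ) ↔ IntegrableOn (fun t => t ^ k • φ t) (Ioi 0) := by
  rw [← range_exp, ← image_univ, integrableOn_image_iff_integrableOn_abs_deriv_smul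
    MeasurableSet.univ (fun u _ => (hasDerivAt_exp u).hasDerivWithinAt) exp_injective.injOn,
    integrableOn_univ]
  simp_rw [← expWeight_succ]

theorem SchwartzMap.integrable_expWeight (φ : SchwartzMap ℝ E) (k : ℕ) :
    Integrable (expWeight (k + 1) φ) := by
  refine integrable_expWeight_iff.2 (Integrable.integrableOn ?_)
  refine (φ.integrable_pow_mul volume k).mono (by fun_prop) (ae_of_all _ fun t => ?_)
  simp [norm_smul]

theorem SchwartzMap.exists_norm_smul_tsum_expWeight_sub_integral_le [CompleteSpace E]
    (φ : SchwartzMap ℝ E) (k : ℕ) :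
    ∃ V, 0 ≤ V ∧ ∀ c h : ℝ, 0 < h →
      Summable (fun n : ℤ => expWeight (k + 1) φ (c + n * h)) ∧
      ‖h • ∑' n : ℤ, expWeight (k + 1) φ (c + n * h) - ∫ t in Ioi 0, t ^ k • φ t‖ ≤
        h ^ 2 / 8 * V := by
  set φ' := SchwartzMap.derivCLM ℝ E φ
  set φ'' := SchwartzMap.derivCLM ℝ E φ'
  have hderiv : ∀ ψ : SchwartzMap ℝ E, ∀ t, HasDerivAt ψ (SchwartzMap.derivCLM ℝ E ψ t) t :=
    fun ψ t => by simpa only [SchwartzMap.derivCLM_apply] using ψ.hasDerivAt t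
  set g' : ℝ → E := fun u => ((k + 1 : ℕ) : ℝ) • expWeight (k + 1) φ u + expWeight (k + 2) φ' u
  set g'' : ℝ → E := fun u => ((k + 1 : ℕ) : ℝ) • g' u +
    (((k + 2 : ℕ) : ℝ) • expWeight (k + 2) φ' u + expWeight (k + 3) φ'' u)
  have hg : ∀ u, HasDerivAt (expWeight (k + 1) φ) (g' u) u :=
    fun u => hasDerivAt_expWeight (k + 1) (hderiv φ _)
  have hg' : ∀ u, HasDerivAt g' (g'' u) u := fun u =>
    ((hasDerivAt_expWeight (k + 1) (hderiv φ _)).const_smul _).add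
      (hasDerivAt_expWeight (k + 2) (hderiv φ' _))
  have hgi := φ.integrable_expWeight k
  have hg'i : Integrable g' := (hgi.smul _).add (φ'.integrable_expWeight (k + 1))
  have hg''i : Integrable g'' :=
    (hg'i.smul _).add (((φ'.integrable_expWeight (k + 1)).smul _).add
      (φ''.integrable_expWeight (k + 2)))
  refine ⟨∫ u, ‖g'' u‖, integral_nonneg fun _ => norm_nonneg _, fun c h hh =>
    ⟨summable_comp_add_mul_of_integrable_deriv hg hgi hg'i c hh, ?_⟩⟩
  rw [← integral_expWeight]
  exact norm_smul_tsum_sub_integral_le hg hg' hgi hg'i hg''i c hh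

noncomputable def SchwartzMap.normSq {D V : Type*} [NormedAddCommGroup D] [NormedSpace ℝ D]
    [NormedAddCommGroup V] [InnerProductSpace ℝ V] (H : SchwartzMap D V) : SchwartzMap D ℝ :=
  SchwartzMap.pairing (innerSL ℝ) H H

theorem SchwartzMap.normSq_apply {D V : Type*} [NormedAddCommGroup D] [NormedSpace ℝ D]
    [NormedAddCommGroup V] [InnerProductSpace ℝ V] (H : SchwartzMap D V) (x : D) :
    H.normSq x = ‖H x‖ ^ 2 :=
  real_inner_self_eq_norm_sq (H x)

theorem SchwartzMap.expWeight_two_normSq_log (H : SchwartzMap ℝ ℂ) {t : ℝ} (ht : 0 < t) :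
    expWeight 2 H.normSq (log t) = ‖(t : ℂ) * H t‖ ^ 2 := by
  rw [expWeight, exp_nat_mul, exp_log ht, normSq_apply, norm_mul, Complex.norm_real,
    norm_of_nonneg ht.le, smul_eq_mul, mul_pow]

theorem SchwartzMap.integral_Ioi_pow_one_smul_normSq_pos (H : SchwartzMap ℝ ℂ)
    (hH : ∃ s : ℝ, 0 < s ∧ H s ≠ 0) : 0 < ∫ t in Ioi 0, t ^ 1 • H.normSq t := by
  obtain ⟨s, hs, hHs⟩ := hH
  rw [← integral_expWeight]
  refine integral_pos_of_integrable_nonneg_nonzero (x := log s) ?_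
    (H.normSq.integrable_expWeight 1) (fun u => ?_) ?_
  · unfold expWeight; fun_prop
  · simp only [Pi.zero_apply, expWeight, normSq_apply]
    positivity
  · rw [H.expWeight_two_normSq_log hs]
    exact pow_ne_zero _ (norm_ne_zero_iff.2 (mul_ne_zero (by exact_mod_cast hs.ne') hHs))

theorem bounds_of_abs_two_log_mul_sub_le {I V C a S : ℝ} (hV : 0 ≤ V)
    (hVC : V ≤ I * C) (ha : 1 < a) (ha' : a < 1 + exp (-1))
    (hS : |2 * log a * S - I| ≤ (2 * log a) ^ 2 / 8 * V) :
    I / (2 * log a) * (1 - C * (a - 1) ^ 2 * |log (a - 1)|) ≤ S ∧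
      S ≤ I / (2 * log a) * (1 + C * (a - 1) ^ 2 * |log (a - 1)|) := by
  have hlog : 0 < log a := log_pos ha
  have hlog_le : log a ≤ a - 1 := by linarith [log_le_sub_one_of_pos (by linarith : 0 < a)]
  have hL : 1 ≤ |log (a - 1)| := by
    have : log (a - 1) < -1 := by
      simpa using log_lt_log (by linarith : 0 < a - 1) (by linarith : a - 1 < exp (-1))
    rw [abs_of_neg (by linarith)]
    linarith
  have herr : (2 * log a) ^ 2 / 8 * V ≤ I * (C * (a - 1) ^ 2 * |log (a - 1)|) :=
    calc (2 * log a) ^ 2 / 8 * V ≤ (a - 1) ^ 2 * V := by gcongr; nlinarith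
      _ ≤ (a - 1) ^ 2 * V * |log (a - 1)| := le_mul_of_one_le_right (by positivity) hL
      _ ≤ (a - 1) ^ 2 * (I * C) * |log (a - 1)| := by gcongr
      _ = I * (C * (a - 1) ^ 2 * |log (a - 1)|) := by ring
  obtain ⟨hlow, hhigh⟩ := abs_le.mp hS
  constructor
  · rw [div_mul_eq_mul_div, div_le_iff₀ (by positivity)]
    linarith
  · rw [div_mul_eq_mul_div, le_div_iff₀ (by positivity)]
    linarith

theorem stmt0 (H : SchwartzMap ℝ ℂ) (hH : ∃ s : ℝ, 0 < s ∧ H s ≠ 0)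
    (F : ℝ → ℂ) (hF : ∀ s : ℝ, F s = (s : ℂ) * H s)
    (I : ℝ) (hI : I = ∫ t in Set.Ioi (0 : ℝ), ‖F t‖ ^ 2 / t) :
    IntegrableOn (fun t : ℝ => ‖F t‖ ^ 2 / t) (Set.Ioi 0) ∧ 0 < I ∧
    ∃ C > 0, ∃ δ ∈ Set.Ioo (0 : ℝ) 1, ∀ a : ℝ, 1 < a → a < 1 + δ → ∀ s : ℝ, 0 < s →
      Summable (fun m : ℤ => ‖F (a ^ (2 * m) * s)‖ ^ 2) ∧
      I / (2 * Real.log a) * (1 - C * (a - 1) ^ 2 * |Real.log (a - 1)|) ≤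
        (∑' m : ℤ, ‖F (a ^ (2 * m) * s)‖ ^ 2) ∧
      (∑' m : ℤ, ‖F (a ^ (2 * m) * s)‖ ^ 2) ≤
        I / (2 * Real.log a) * (1 + C * (a - 1) ^ 2 * |Real.log (a - 1)|) := by
  set N := H.normSq
  have hFN : ∀ t, 0 < t → ‖F t‖ ^ 2 = expWeight 2 N (log t) := fun t ht => by
    rw [hF, H.expWeight_two_normSq_log ht]
  have hFI : EqOn (fun t => ‖F t‖ ^ 2 / t) (fun t => t ^ 1 • N t) (Ioi 0) := by
    intro t (ht : 0 < t)
    dsimp only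
    rw [hFN t ht, expWeight, exp_nat_mul, exp_log ht, smul_eq_mul, smul_eq_mul]
    field_simp [ht.ne']
  have hIN : I = ∫ t in Ioi 0, t ^ 1 • N t := by
    rw [hI, setIntegral_congr_fun measurableSet_Ioi hFI]
  obtain ⟨V, hV, hsum⟩ := N.exists_norm_smul_tsum_expWeight_sub_integral_le 1
  have hIpos : 0 < I := hIN ▸ H.integral_Ioi_pow_one_smul_normSq_pos hH
  refine ⟨(integrable_expWeight_iff.1 (N.integrable_expWeight 1)).congr_fun hFI.symm
    measurableSet_Ioi, hIpos, (V + 1) / I, by positivity, exp (-1),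
    ⟨exp_pos _, exp_lt_one_iff.2 (by norm_num)⟩, fun a ha ha' s hs => ?_⟩
  have hgrid : ∀ m : ℤ, ‖F (a ^ (2 * m) * s)‖ ^ 2 = expWeight 2 N (log s + m * (2 * log a)) := by
    intro m
    have ha0 : 0 < a := by linarith
    rw [hFN _ (by positivity), log_mul (by positivity) hs.ne', log_zpow]
    push_cast; ring_nf
  simp_rw [hgrid]
  obtain ⟨hsumm, hbound⟩ := hsum (log s) (2 * log a) (by linarith [log_pos ha])
  rw [← hIN, norm_eq_abs, smul_eq_mul] at hbound
  exact ⟨hsumm, bounds_of_abs_two_log_mul_sub_le hV (by field_simp; linarith) ha ha' hbound⟩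
end

section
/- Let G : ℝ → ℝ be a twice continuously differentiable function with ‖G''‖_∞ < ∞, and suppose there is K > 0 with |G(u)| ≤ K·e^{−2|u|} for all u ∈ ℝ. Let I = ∫_ℝ G(u) du. Then there exists P > 0 such that for every c ∈ (0, 1/e), every v ∈ [0, c], and every positive integer N, the series ∑_{n∈ℤ} G(nc + v) converges absolutely and |c·∑_{n∈ℤ} G(nc + v) − I| ≤ P·(N·c³ + e^{−2Nc}). -/
/-!
Both `c · ∑ₙ G(nc + v)` and `∫ G` are sums over the cells `[nc + v - c/2, nc + v + c/2]`,
`n ∈ ℤ`, which tile the line, so their difference is the sum of the midpoint-rule errors of the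
cells. Each error is `O(‖G''‖∞ c³)` by the midpoint rule, and also `O(c e^{-2|n|c})` by the
decay of `G`. The first bound is used for the `2N` cells with `-N ≤ n < N`, the second for the
rest, a geometric tail of ratio `e^{-2c}`; since `c / (1 - e^{-2c})` stays bounded for `c ≤ 1`,
the total is `O(N c³ + e^{-2Nc})`.
-/

open MeasureTheory Real Set

noncomputable def midpointError (G : ℝ → ℝ) (x h : ℝ) : ℝ :=
  2 * h * G x - ∫ u in x - h..x + h, G u

section MidpointRule

variable {G : ℝ → ℝ} {M : ℝ}

theorem abs_deriv_add_sub_deriv_sub_le (hG' : Differentiable ℝ (deriv G))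
    (hM : ∀ u, |deriv (deriv G) u| ≤ M) (x t : ℝ) :
    |deriv G (x + t) - deriv G (x - t)| ≤ M * (2 * |t|) := by
  have := convex_univ.norm_image_sub_le_of_norm_deriv_le (fun u _ ↦ hG' u) (fun u _ ↦ hM u)
    (mem_univ (x - t)) (mem_univ (x + t))
  rwa [Real.norm_eq_abs, Real.norm_eq_abs, add_sub_sub_cancel, ← two_mul, abs_mul,
    abs_two] at this

theorem abs_second_difference_le (hG : Differentiable ℝ G) (hG' : Differentiable ℝ (deriv G))
    (hM : ∀ u, |deriv (deriv G) u| ≤ M) (x : ℝ) {t : ℝ} (ht : 0 ≤ t) :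
    |G (x + t) + G (x - t) - 2 * G x| ≤ 2 * M * t ^ 2 := by
  have hderiv (s : ℝ) : HasDerivAt (fun s ↦ G (x + s) + G (x - s))
      (deriv G (x + s) - deriv G (x - s)) s := by
    have hr := (hG (x + s)).hasDerivAt.comp_const_add x s
    have hl := (hG (x - s)).hasDerivAt.comp_const_sub x s
    exact (hr.add hl).congr_deriv (sub_eq_add_neg _ _).symm
  have hbound : ∀ s ∈ Ico 0 t, ‖deriv G (x + s) - deriv G (x - s)‖ ≤ M * (2 * t) := by
    rintro s ⟨hs0, hst⟩
    have hM0 : 0 ≤ M := (abs_nonneg _).trans (hM 0)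
    calc _ ≤ M * (2 * |s|) := abs_deriv_add_sub_deriv_sub_le hG' hM x s
      _ ≤ M * (2 * t) := by rw [abs_of_nonneg hs0]; gcongr
  have := norm_image_sub_le_of_norm_deriv_le_segment' (fun s _ ↦ (hderiv s).hasDerivWithinAt)
    hbound t (right_mem_Icc.2 ht)
  rw [Real.norm_eq_abs, add_zero, sub_zero, ← two_mul] at this
  linarith

theorem abs_midpointError_le (hG : Differentiable ℝ G) (hG' : Differentiable ℝ (deriv G))
    (hM : ∀ u, |deriv (deriv G) u| ≤ M) (x : ℝ) {h : ℝ} (hh : 0 ≤ h) :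
    |midpointError G x h| ≤ 2 * M * h ^ 3 := by
  set F : ℝ → ℝ := fun y ↦ ∫ u in 0..y, G u
  have hF (y : ℝ) : HasDerivAt F (G y) y :=
    (hG.continuous.integral_hasStrictDerivAt 0 y).hasDerivAt
  have hint (y : ℝ) : (∫ u in x - y..x + y, G u) = F (x + y) - F (x - y) :=
    (intervalIntegral.integral_interval_sub_left (hG.continuous.intervalIntegrable _ _)
      (hG.continuous.intervalIntegrable _ _)).symm
  have hderiv (s : ℝ) : HasDerivAt (fun s ↦ F (x + s) - F (x - s) - 2 * s * G x)
      (G (x + s) + G (x - s) - 2 * G x) s := by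
    have hr := (hF (x + s)).comp_const_add x s
    have hl := (hF (x - s)).comp_const_sub x s
    have hlin := ((hasDerivAt_id s).const_mul 2).mul_const (G x)
    exact ((hr.sub hl).sub hlin).congr_deriv (by simp)
  have hbound : ∀ s ∈ Ico 0 h, ‖G (x + s) + G (x - s) - 2 * G x‖ ≤ 2 * M * h ^ 2 := by
    rintro s ⟨hs0, hsh⟩
    have hM0 : 0 ≤ M := (abs_nonneg _).trans (hM 0)
    calc _ ≤ 2 * M * s ^ 2 := abs_second_difference_le hG hG' hM x hs0
      _ ≤ 2 * M * h ^ 2 := by gcongr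
  have := norm_image_sub_le_of_norm_deriv_le_segment' (fun s _ ↦ (hderiv s).hasDerivWithinAt)
    hbound h (right_mem_Icc.2 hh)
  rw [midpointError, hint, abs_sub_comm]
  simpa [Real.norm_eq_abs, pow_succ, mul_assoc] using this

end MidpointRule

theorem abs_midpointError_le_of_abs_le {G : ℝ → ℝ} {x h C : ℝ} (hh : 0 ≤ h)
    (hC : ∀ u ∈ Icc (x - h) (x + h), |G u| ≤ C) : |midpointError G x h| ≤ 4 * h * C := by
  have hint := intervalIntegral.norm_integral_le_of_norm_le_const (f := G) fun u hu ↦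
    hC u (uIoc_subset_uIcc.trans (uIcc_of_le (by linarith)).subset hu)
  have hx := hC x ⟨by linarith, by linarith⟩
  rw [Real.norm_eq_abs, add_sub_sub_cancel, abs_of_nonneg (by linarith : 0 ≤ h + h)] at hint
  calc _ ≤ |2 * h * G x| + |∫ u in x - h..x + h, G u| := abs_sub _ _
    _ ≤ 2 * h * C + C * (h + h) := by
      rw [abs_mul, abs_of_nonneg (by linarith)]
      gcongr
    _ = 4 * h * C := by ring

theorem MeasureTheory.Integrable.hasSum_intervalIntegral_add_mul_s1 {E : Type*}
    [NormedAddCommGroup E] [NormedSpace ℝ E] {f : ℝ → E} {μ : Measure ℝ} (hf : Integrable f μ)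
    (a : ℝ) {p : ℝ} (hp : 0 < p) :
    HasSum (fun n : ℤ ↦ ∫ x in a + n * p..a + n * p + p, f x ∂μ) (∫ x, f x ∂μ) := by
  have hcells := hasSum_integral_iUnion (fun _ ↦ measurableSet_Ioc)
    (pairwise_disjoint_Ioc_add_zsmul a p) (by rw [iUnion_Ioc_add_zsmul hp]; exact hf.integrableOn)
  rw [iUnion_Ioc_add_zsmul hp, setIntegral_univ] at hcells
  convert hcells using 2 with n
  rw [intervalIntegral.integral_of_le (by linarith), zsmul_eq_mul, zsmul_eq_mul]
  push_cast
  ring_nf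

theorem hasSum_midpointError {G : ℝ → ℝ} (hG : Integrable G) {c v : ℝ} (hc : 0 < c)
    (hsum : Summable fun n : ℤ ↦ G (n * c + v)) :
    HasSum (fun n : ℤ ↦ midpointError G (n * c + v) (c / 2))
      (c * ∑' n : ℤ, G (n * c + v) - ∫ u, G u) := by
  refine ((hsum.hasSum.mul_left c).sub
    (hG.hasSum_intervalIntegral_add_mul_s1 (v - c / 2) hc)).congr_fun fun n ↦ ?_
  rw [midpointError]
  congr 2 <;> ring

section GeometricTail

variable {A B r : ℝ}

theorem summable_pow_natAbs (hr0 : 0 ≤ r) (hr1 : r < 1) : Summable fun n : ℤ ↦ r ^ n.natAbs :=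
  .of_nat_of_neg (by simpa using summable_geometric_of_lt_one hr0 hr1)
    (by simpa using summable_geometric_of_lt_one hr0 hr1)

theorem abs_tsum_le_of_abs_le_geometric {a : ℕ → ℝ} (hr0 : 0 ≤ r) (hr1 : r < 1)
    (hA : ∀ n, |a n| ≤ A) (hB : ∀ n, |a n| ≤ B * r ^ n) (N : ℕ) :
    |∑' n, a n| ≤ N * A + B * r ^ N / (1 - r) := by
  have htail := (hasSum_geometric_of_lt_one hr0 hr1).mul_left (B * r ^ N)
  have hsum : Summable a := .of_norm_bounded ((summable_geometric_of_lt_one hr0 hr1).mul_left B) hB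
  rw [← hsum.sum_add_tsum_nat_add N, div_eq_mul_inv]
  calc _ ≤ ∑ i ∈ Finset.range N, |a i| + ‖∑' n, a (n + N)‖ :=
        (abs_add_le _ _).trans (add_le_add_left (Finset.abs_sum_le_sum_abs _ _) _)
    _ ≤ N * A + B * r ^ N * (1 - r)⁻¹ := by
      gcongr
      · simpa using Finset.sum_le_card_nsmul (Finset.range N) _ _ fun i _ ↦ hA i
      · exact tsum_of_norm_bounded htail fun n ↦ (hB (n + N)).trans_eq (by ring)

theorem abs_tsum_int_le_of_abs_le_geometric {e : ℤ → ℝ} (hr0 : 0 ≤ r) (hr1 : r < 1)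
    (hA : ∀ n, |e n| ≤ A) (hB : ∀ n, |e n| ≤ B * r ^ n.natAbs) (N : ℕ) :
    |∑' n, e n| ≤ 2 * (N * A + B * r ^ N / (1 - r)) := by
  have hB0 : 0 ≤ B := by simpa using (abs_nonneg _).trans (hB 0)
  rw [← tsum_nat_add_neg_add_one (.of_norm_bounded ((summable_pow_natAbs hr0 hr1).mul_left B) hB)]
  have hfold (n : ℕ) : |e n + e (-(n + 1))| ≤ 2 * B * r ^ n := by
    have hpos : |e n| ≤ B * r ^ n := by simpa using hB n
    have hneg : |e (-(n + 1))| ≤ B * r ^ (n + 1) := by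
      have := hB (-((n + 1 : ℕ) : ℤ))
      rwa [Int.natAbs_neg, Int.natAbs_natCast, Nat.cast_succ] at this
    have hmono : B * r ^ (n + 1) ≤ B * r ^ n :=
      mul_le_mul_of_nonneg_left (pow_le_pow_of_le_one hr0 hr1.le n.le_succ) hB0
    linarith [abs_add_le (e n) (e (-(n + 1)))]
  convert abs_tsum_le_of_abs_le_geometric (a := fun n : ℕ ↦ e n + e (-(n + 1))) hr0 hr1
    (fun n ↦ (abs_add_le _ _).trans (add_le_add (hA n) (hA _))) hfold N using 1
  ring

end GeometricTail

section ExponentialDecay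

variable {G : ℝ → ℝ} {K : ℝ}

theorem exp_neg_two_mul_abs_le_inv_one_add_sq (u : ℝ) : exp (-2 * |u|) ≤ (1 + u ^ 2)⁻¹ := by
  rw [neg_mul, exp_neg]
  gcongr
  nlinarith [quadratic_le_exp_of_nonneg (by positivity : 0 ≤ 2 * |u|), abs_nonneg u, sq_abs u]

theorem integrable_of_abs_le_mul_exp_neg_two_mul_abs (hG : Continuous G)
    (hdecay : ∀ u, |G u| ≤ K * exp (-2 * |u|)) : Integrable G := by
  have hK : 0 ≤ K := by simpa using (abs_nonneg _).trans (hdecay 0)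
  refine (integrable_inv_one_add_sq.const_mul K).mono' hG.aestronglyMeasurable
    (.of_forall fun u ↦ (hdecay u).trans ?_)
  gcongr
  exact exp_neg_two_mul_abs_le_inv_one_add_sq u

theorem exp_neg_two_mul_abs_le_of_exp_decay {c d u : ℝ} (hc : 0 ≤ c) (n : ℤ)
    (h : |u - n * c| ≤ d) : exp (-2 * |u|) ≤ exp (2 * d) * exp (-2 * c) ^ n.natAbs := by
  rw [← exp_nat_mul, ← exp_add, exp_le_exp, Nat.cast_natAbs, Int.cast_abs]
  have : |(n : ℝ)| * c ≤ |u| + d := by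
    calc |(n : ℝ)| * c = |u - (u - n * c)| := by rw [sub_sub_cancel, abs_mul, abs_of_nonneg hc]
      _ ≤ |u| + |u - n * c| := abs_sub _ _
      _ ≤ |u| + d := by gcongr
  linarith

theorem abs_le_of_exp_decay (hdecay : ∀ u, |G u| ≤ K * exp (-2 * |u|)) {c d u : ℝ}
    (hc : 0 ≤ c) (n : ℤ) (h : |u - n * c| ≤ d) :
    |G u| ≤ K * exp (2 * d) * exp (-2 * c) ^ n.natAbs := by
  have hK : 0 ≤ K := by simpa using (abs_nonneg _).trans (hdecay 0)
  calc |G u| ≤ K * exp (-2 * |u|) := hdecay u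
    _ ≤ K * (exp (2 * d) * exp (-2 * c) ^ n.natAbs) := by
      gcongr
      exact exp_neg_two_mul_abs_le_of_exp_decay hc n h
    _ = _ := by ring

theorem summable_abs_comp_mul_add (hdecay : ∀ u, |G u| ≤ K * exp (-2 * |u|)) {c : ℝ}
    (hc : 0 < c) (v : ℝ) : Summable fun m : ℤ ↦ |G (m * c + v)| :=
  .of_nonneg_of_le (fun _ ↦ abs_nonneg _)
    (fun m ↦ abs_le_of_exp_decay hdecay hc.le m (d := |v|) (by rw [add_sub_cancel_left]))
    ((summable_pow_natAbs (exp_pos _).le (exp_lt_one_iff.2 (by linarith))).mul_left _)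

theorem abs_midpointError_le_of_decay (hdecay : ∀ u, |G u| ≤ K * exp (-2 * |u|)) {c v : ℝ}
    (hc : 0 ≤ c) (hv : |v| ≤ c) (n : ℤ) :
    |midpointError G (n * c + v) (c / 2)| ≤
      2 * c * K * exp (3 * c) * exp (-2 * c) ^ n.natAbs := by
  refine (abs_midpointError_le_of_abs_le (by linarith) fun u hu ↦
    abs_le_of_exp_decay hdecay hc n (d := 3 * c / 2) ?_).trans_eq (by ring_nf)
  rw [abs_le] at hv ⊢
  constructor <;> linarith [hu.1, hu.2]

end ExponentialDecay

theorem div_one_sub_exp_neg_two_mul_le {c : ℝ} (hc0 : 0 < c) (hc1 : c ≤ 1) :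
    c / (1 - exp (-2 * c)) ≤ 3 / 2 := by
  have hexp : exp (-2 * c) * (1 + 2 * c) ≤ 1 := by
    calc exp (-2 * c) * (1 + 2 * c) ≤ exp (-2 * c) * exp (2 * c) := by
          gcongr; linarith [add_one_le_exp (2 * c)]
      _ = 1 := by rw [← exp_add]; simp
  have hpos : 0 < 1 - exp (-2 * c) := sub_pos.2 (exp_lt_one_iff.2 (by linarith))
  rw [div_le_iff₀ hpos]
  nlinarith

theorem stmt1 (G : ℝ → ℝ) (hG : ContDiff ℝ 2 G)
    (M : ℝ) (hM : ∀ u : ℝ, |deriv (deriv G) u| ≤ M)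
    (K : ℝ) (hK : 0 < K) (hdecay : ∀ u : ℝ, |G u| ≤ K * Real.exp (-2 * |u|))
    (I : ℝ) (hI : I = ∫ u : ℝ, G u) :
    ∃ P > 0, ∀ c ∈ Set.Ioo (0 : ℝ) (1 / Real.exp 1), ∀ v ∈ Set.Icc (0 : ℝ) c,
      ∀ N : ℕ, 0 < N →
        Summable (fun m : ℤ => |G (m * c + v)|) ∧
        |c * (∑' m : ℤ, G (m * c + v)) - I| ≤
          P * (N * c ^ 3 + Real.exp (-2 * N * c)) := by
  have hM0 : 0 ≤ M := (abs_nonneg _).trans (hM 0)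
  refine ⟨M + 6 * K * exp 3, by positivity, ?_⟩
  rintro c ⟨hc0, hce⟩ v ⟨hv0, hvc⟩ N -
  have hc1 : c < 1 := hce.trans (by rw [div_lt_one (exp_pos 1)]; exact one_lt_exp_iff.2 one_pos)
  have hr1 : exp (-2 * c) < 1 := exp_lt_one_iff.2 (by linarith)
  have hsum := summable_abs_comp_mul_add hdecay hc0 v
  refine ⟨hsum, ?_⟩
  have hA (n : ℤ) := abs_midpointError_le (hG.differentiable (by norm_num))
    hG.differentiable_deriv_two hM (n * c + v) (by linarith : 0 ≤ c / 2)
  have hB := abs_midpointError_le_of_decay hdecay hc0.le (abs_le.2 ⟨by linarith, hvc⟩)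
  rw [hI, ← (hasSum_midpointError (integrable_of_abs_le_mul_exp_neg_two_mul_abs hG.continuous
    hdecay) hc0 hsum.of_abs).tsum_eq]
  refine (abs_tsum_int_le_of_abs_le_geometric (exp_pos _).le hr1 hA hB N).trans ?_
  have htail : 2 * c * K * exp (3 * c) * exp (-2 * c) ^ N / (1 - exp (-2 * c)) ≤
      3 * K * exp 3 * exp (-2 * N * c) :=
    calc _ = 2 * (K * exp (-2 * N * c)) * (c / (1 - exp (-2 * c)) * exp (3 * c)) := by
          rw [← exp_nat_mul]; ring_nf
      _ ≤ 2 * (K * exp (-2 * N * c)) * (3 / 2 * exp 3) := by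
        gcongr _ * (?_ * ?_)
        · exact div_one_sub_exp_neg_two_mul_le hc0 hc1.le
        · exact exp_le_exp.2 (by linarith)
      _ = _ := by ring
  have h1 : 0 ≤ M * N * c ^ 3 := by positivity
  have h2 : 0 ≤ M * exp (-2 * N * c) + 6 * K * exp 3 * N * c ^ 3 := by positivity
  linarith
end

section
/- Let a > 1, let f : ℝ → ℂ be a Schwartz function, set g(λ) = λ·f(λ), and let u(λ) = ∑_{j∈ℤ} |g(a^{2j}λ)|² for λ > 0. Then inf_{λ>0} u(λ) > 0 (Daubechies' criterion holds) if and only if there does not exist λ₀ > 0 such that g(a^{2j}λ₀) = 0 for every integer j. -/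
/-!
Because `g` vanishes linearly at `0` and decays like `1/λ` at infinity, the terms of the
series for `u` on a compact subset of `(0, ∞)` are dominated by a two-sided geometric series,
so `u` is continuous there. Being invariant under `λ ↦ a²λ`, `u` takes on `(0, ∞)` exactly its
values on the fundamental domain `[1, a²]`, so its infimum is a minimum `u λ₀`; and `u λ₀ > 0`
exactly when some term `g (a^{2j} λ₀)` is nonzero.
-/

open Set

noncomputable def orbitSum (b : ℝ) (h : ℝ → ℝ) (x : ℝ) : ℝ :=
  ∑' j : ℤ, h (b ^ j * x)

theorem orbitSum_zpow_mul {b : ℝ} (hb : b ≠ 0) (h : ℝ → ℝ) (n : ℤ) (x : ℝ) :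
    orbitSum b h (b ^ n * x) = orbitSum b h x := by
  unfold orbitSum
  simp_rw [← mul_assoc, ← zpow_add₀ hb]
  exact (Equiv.addRight n).tsum_eq fun j => h (b ^ j * x)

theorem summable_mul_pow_natAbs {r : ℝ} (hr0 : 0 ≤ r) (hr1 : r < 1) (K : ℝ) :
    Summable fun j : ℤ => K * r ^ j.natAbs := by
  have := (summable_geometric_of_lt_one hr0 hr1).mul_left K
  exact .of_nat_of_neg (by simpa using this) (by simpa using this)

theorem apply_zpow_mul_le {b C m M x : ℝ} {h : ℝ → ℝ} (hb : 1 < b) (h0 : ∀ y, 0 ≤ h y)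
    (hC : ∀ y, 0 < y → h y ≤ C * y ∧ h y ≤ C * y⁻¹) (hm : 0 < m) (hx : x ∈ Icc m M) (j : ℤ) :
    h (b ^ j * x) ≤ C * max M m⁻¹ * b⁻¹ ^ j.natAbs := by
  have hC0 : 0 ≤ C := by simpa using (h0 1).trans (hC 1 one_pos).1
  have hx0 : 0 < x := hm.trans_le hx.1
  have hb0 : 0 < b := one_pos.trans hb
  obtain ⟨n, rfl | rfl⟩ := Int.eq_nat_or_neg j
  · calc h (b ^ (n : ℤ) * x) ≤ C * (b ^ n * x)⁻¹ := by
          simpa using (hC (b ^ n * x) (by positivity)).2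
      _ = C * x⁻¹ * b⁻¹ ^ n := by rw [mul_inv, inv_pow]; ring
      _ ≤ C * max M m⁻¹ * b⁻¹ ^ n := by
        gcongr
        exact (inv_anti₀ hm hx.1).trans (le_max_right _ _)
      _ = _ := by simp
  · calc h (b ^ (-(n : ℤ)) * x) ≤ C * (b⁻¹ ^ n * x) := by
          simpa [inv_pow] using (hC _ (by positivity)).1
      _ = C * x * b⁻¹ ^ n := by ring
      _ ≤ C * max M m⁻¹ * b⁻¹ ^ n := by
        gcongr
        exact hx.2.trans (le_max_left _ _)
      _ = _ := by simp

theorem summable_apply_zpow_mul {b C x : ℝ} {h : ℝ → ℝ} (hb : 1 < b) (h0 : ∀ y, 0 ≤ h y)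
    (hC : ∀ y, 0 < y → h y ≤ C * y ∧ h y ≤ C * y⁻¹) (hx : 0 < x) :
    Summable fun j : ℤ => h (b ^ j * x) :=
  .of_nonneg_of_le (fun j => h0 _) (apply_zpow_mul_le hb h0 hC hx ⟨le_rfl, le_rfl⟩)
    (summable_mul_pow_natAbs (by positivity) (inv_lt_one_of_one_lt₀ hb) _)

theorem continuousOn_orbitSum {b C m M : ℝ} {h : ℝ → ℝ} (hb : 1 < b) (hh : Continuous h)
    (h0 : ∀ y, 0 ≤ h y) (hC : ∀ y, 0 < y → h y ≤ C * y ∧ h y ≤ C * y⁻¹) (hm : 0 < m) :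
    ContinuousOn (orbitSum b h) (Icc m M) :=
  continuousOn_tsum (fun j => (hh.comp (continuous_const_mul _)).continuousOn)
    (summable_mul_pow_natAbs (by positivity) (inv_lt_one_of_one_lt₀ hb) _)
    fun j x hx => by
      rw [Real.norm_of_nonneg (h0 _)]
      exact apply_zpow_mul_le hb h0 hC hm hx j

theorem orbitSum_pos_iff {b x : ℝ} {h : ℝ → ℝ} (h0 : ∀ y, 0 ≤ h y)
    (hsum : Summable fun j : ℤ => h (b ^ j * x)) :
    0 < orbitSum b h x ↔ ∃ j : ℤ, h (b ^ j * x) ≠ 0 := by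
  refine ⟨fun hpos => ?_, fun ⟨j, hj⟩ => hsum.tsum_pos (fun _ => h0 _) j ((h0 _).lt_of_ne' hj)⟩
  by_contra! hzero
  simp [orbitSum, hzero] at hpos

theorem exists_isMinOn_Ioi_of_zpow_mul_eq {b : ℝ} {φ : ℝ → ℝ} (hb : 1 < b)
    (hφ : ∀ (n : ℤ) (x : ℝ), φ (b ^ n * x) = φ x) (hcont : ContinuousOn φ (Icc 1 b)) :
    ∃ x₀ ∈ Ioi 0, IsMinOn φ (Ioi 0) x₀ := by
  obtain ⟨x₀, hx₀, hmin⟩ := isCompact_Icc.exists_isMinOn (nonempty_Icc.2 hb.le) hcont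
  refine ⟨x₀, one_pos.trans_le hx₀.1, fun x (hx : 0 < x) => ?_⟩
  obtain ⟨n, hn⟩ := exists_mem_Ico_zpow hx hb
  have hbn : 0 < b ^ n := zpow_pos (one_pos.trans hb) n
  have hrep : b ^ (-n) * x ∈ Icc 1 b := by
    rw [zpow_neg, ← div_eq_inv_mul]
    refine ⟨(one_le_div hbn).2 hn.1, (div_le_iff₀ hbn).2 ?_⟩
    simpa [zpow_add_one₀ (one_pos.trans hb).ne', mul_comm] using hn.2.le
  have : φ x₀ ≤ φ (b ^ (-n) * x) := hmin hrep
  rwa [hφ] at this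

theorem SchwartzMap.exists_sq_norm_ofReal_mul_le (f : SchwartzMap ℝ ℂ) :
    ∃ C, ∀ y : ℝ, 0 < y → ‖(y : ℂ) * f y‖ ^ 2 ≤ C * y ∧ ‖(y : ℂ) * f y‖ ^ 2 ≤ C * y⁻¹ := by
  set C₀ := SchwartzMap.seminorm ℝ 0 0 f
  set C₁ := SchwartzMap.seminorm ℝ 1 0 f
  set C₂ := SchwartzMap.seminorm ℝ 2 0 f
  refine ⟨C₁ * max C₀ C₂, fun y hy => ?_⟩
  have hk (k : ℕ) : y ^ k * ‖f y‖ ≤ SchwartzMap.seminorm ℝ k 0 f := by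
    simpa [abs_of_pos hy] using f.norm_pow_mul_le_seminorm ℝ k y
  have hg : ‖(y : ℂ) * f y‖ = y * ‖f y‖ := by
    rw [norm_mul, Complex.norm_real, Real.norm_of_nonneg hy.le]
  have hC₁ : 0 ≤ C₁ := (by positivity : 0 ≤ y ^ 1 * ‖f y‖).trans (hk 1)
  constructor
  · calc ‖(y : ℂ) * f y‖ ^ 2 = (y ^ 1 * ‖f y‖) * (y ^ 0 * ‖f y‖) * y := by rw [hg]; ring
      _ ≤ C₁ * C₀ * y := by gcongr <;> exact hk _
      _ ≤ C₁ * max C₀ C₂ * y := by gcongr; exact le_max_left _ _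
  · calc ‖(y : ℂ) * f y‖ ^ 2 = (y ^ 1 * ‖f y‖) * (y ^ 2 * ‖f y‖) * y⁻¹ := by
          rw [hg]; field_simp
      _ ≤ C₁ * C₂ * y⁻¹ := by gcongr <;> exact hk _
      _ ≤ C₁ * max C₀ C₂ * y⁻¹ := by gcongr; exact le_max_right _ _

theorem stmt3 (a : ℝ) (ha : 1 < a) (f : SchwartzMap ℝ ℂ)
    (g : ℝ → ℂ) (hg : ∀ l : ℝ, g l = (l : ℂ) * f l)
    (u : ℝ → ℝ) (hu : ∀ l : ℝ, u l = ∑' j : ℤ, ‖g (a ^ (2 * j) * l)‖ ^ 2) :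
    (0 < ⨅ l : Set.Ioi (0 : ℝ), u l) ↔
      ¬∃ l₀ : ℝ, 0 < l₀ ∧ ∀ j : ℤ, g (a ^ (2 * j) * l₀) = 0 := by
  have hpow (j : ℤ) : a ^ (2 * j) = (a ^ 2) ^ j := by rw [zpow_mul]; norm_cast
  have hb : 1 < a ^ 2 := one_lt_pow₀ ha two_ne_zero
  set h : ℝ → ℝ := fun y => ‖g y‖ ^ 2
  have hu' : u = orbitSum (a ^ 2) h := funext fun l => by simp only [hu, hpow, orbitSum, h]
  have h0 (y : ℝ) : 0 ≤ h y := by positivity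
  have hh : Continuous h := by simp only [h, hg]; fun_prop
  obtain ⟨C, hC⟩ := f.exists_sq_norm_ofReal_mul_le
  simp_rw [← hg] at hC
  obtain ⟨x₀, hx₀, hmin⟩ := exists_isMinOn_Ioi_of_zpow_mul_eq hb
    (orbitSum_zpow_mul (by positivity) h) (continuousOn_orbitSum hb hh h0 hC one_pos)
  have hpos (x : ℝ) (hx : 0 < x) : 0 < u x ↔ ∃ j : ℤ, g (a ^ (2 * j) * x) ≠ 0 := by
    simp only [hu', hpow, orbitSum_pos_iff h0 (summable_apply_zpow_mul hb h0 hC hx), h, ne_eq,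
      pow_eq_zero_iff two_ne_zero, norm_eq_zero]
  rw [← hu'] at hmin
  rw [hmin.iInf_eq hx₀]
  push Not
  exact ⟨fun hu₀ x hx => (hpos x hx).1 (hu₀.trans_le (hmin hx)),
    fun hne => (hpos x₀ hx₀).2 (hne x₀ hx₀)⟩
end
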